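/- For every natural number k ≥ 2 there exists a unitary 4 × 4 complex matrix W (an element of the unitary group of Matrix (Fin 4) (Fin 4) ℂ) with the following property. Let γ_k : (Fin k → Fin 4) → ℂ be the GHZ amplitude function with γ_k(z) = (√2)⁻¹ if z is constantly 0 or constantly 1, and γ_k(z) = 0 otherwise. Then the vector φ = W^{⊗k} γ_k, defined by φ(z) = ∑_{w : Fin k → Fin 4} (∏_{i : Fin k} W (z i) (w i)) · γ_k(w), satisfies φ(z) = 0 for every constant string z (every z such that z i = z j for all i, j). In other words, W^{⊗k} maps the k-partite GHZ state over |0̂⟩, |1̂⟩ to a superposition supported entirely on non-constant strings. -/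

import Mathlib

/-!
The amplitude of `W^{⊗k} γ_k` at the constant string `v…v` is
`(W v 0 ^ k + W v 1 ^ k) / √2`, so it suffices that the first two columns `a, b` of `W`
satisfy `b_v ^ k = -a_v ^ k`. Taking `a_v = √t_v` and `b_v = ω_v √t_v` with `ω_v ^ k = -1`,
the pair `a, b` is orthonormal exactly when `t` is a probability vector with `∑ t_v ω_v = 0`,
and any orthonormal pair is the first two columns of a unitary. With `ζ = exp (iπ/k)`,
`0` is the midpoint of `ζ` and `-ζ` for even `k`, and a convex combination of `ζ`, `ζ̄` and
`-1` for odd `k` (using `cos (π/k) ≥ 0`).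
-/

/-- Amplitude function of the `k`-partite GHZ state over `|0̂⟩, |1̂⟩`
(basis labels in `Fin 4`): amplitude `(√2)⁻¹` on the all-`0` and all-`1`
strings, and `0` elsewhere. -/
noncomputable def ghzAmp (k : ℕ) (z : Fin k → Fin 4) : ℂ :=
  if (∀ i, z i = 0) ∨ (∀ i, z i = 1) then (Real.sqrt 2 : ℂ)⁻¹ else 0

theorem sum_prod_mul_ghzAmp {k : ℕ} (hk : k ≠ 0) (W : Matrix (Fin 4) (Fin 4) ℂ)
    (z : Fin k → Fin 4) :
    ∑ w : Fin k → Fin 4, (∏ i, W (z i) (w i)) * ghzAmp k w =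
      ((∏ i, W (z i) 0) + ∏ i, W (z i) 1) * (Real.sqrt 2 : ℂ)⁻¹ := by
  have hne : (fun _ => 0 : Fin k → Fin 4) ≠ fun _ => 1 := by
    intro h
    simpa using congrFun h ⟨0, Nat.pos_of_ne_zero hk⟩
  have hamp (w : Fin k → Fin 4) : ghzAmp k w =
      ((if w = fun _ => 0 then 1 else 0) + if w = fun _ => 1 then 1 else 0) *
        (Real.sqrt 2 : ℂ)⁻¹ := by
    simp only [ghzAmp, ← funext_iff]
    split_ifs <;> simp_all
  simp only [hamp, ← mul_assoc, mul_add, mul_ite, mul_one, mul_zero, ← Finset.sum_mul,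
    Finset.sum_add_distrib, Finset.sum_ite_eq', Finset.mem_univ, if_true]

theorem Matrix.exists_mem_unitaryGroup_col_eq {𝕜 ι : Type*} [RCLike 𝕜] [Fintype ι]
    [DecidableEq ι] {s : Set ι} (f : ι → EuclideanSpace 𝕜 ι)
    (hf : Orthonormal 𝕜 (s.domRestrict f)) :
    ∃ W ∈ Matrix.unitaryGroup ι 𝕜, ∀ i ∈ s, ∀ v, W v i = f i v := by
  obtain ⟨b, hb⟩ := hf.exists_orthonormalBasis_extension_of_card_eq (by simp)
  refine ⟨(EuclideanSpace.basisFun ι 𝕜).toBasis.toMatrix b,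
    (EuclideanSpace.basisFun ι 𝕜).toMatrix_orthonormalBasis_mem_unitary b, fun i hi v => ?_⟩
  simp [Module.Basis.toMatrix_apply, hb i hi]

theorem Matrix.exists_mem_unitaryGroup_col_eq_sqrt {ι : Type*} [Fintype ι] [DecidableEq ι]
    {i j : ι} (hij : i ≠ j) (t : ι → ℝ) (ω : ι → ℂ) (ht : ∀ v, 0 ≤ t v)
    (ht₁ : ∑ v, t v = 1) (hω : ∀ v, ‖ω v‖ = 1) (htω : ∑ v, t v * ω v = 0) :
    ∃ W ∈ Matrix.unitaryGroup ι ℂ, ∀ v, W v i = √(t v) ∧ W v j = ω v * √(t v) := by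
  set a : EuclideanSpace ℂ ι := WithLp.toLp 2 fun v => (√(t v) : ℂ)
  set b : EuclideanSpace ℂ ι := WithLp.toLp 2 fun v => ω v * √(t v)
  have ha : ‖a‖ = 1 := by
    simp [a, EuclideanSpace.norm_eq, Real.sq_sqrt (ht _), ht₁]
  have hb : ‖b‖ = 1 := by
    simp [b, EuclideanSpace.norm_eq, hω, Real.sq_sqrt (ht _), ht₁]
  have hab : inner ℂ a b = 0 := by
    simp only [a, b, PiLp.inner_apply, RCLike.inner_apply, Complex.conj_ofReal, ← htω]
    refine Finset.sum_congr rfl fun v _ => ?_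
    rw [mul_assoc, ← Complex.ofReal_mul, Real.mul_self_sqrt (ht v), mul_comm]
  have hba : inner ℂ b a = 0 := by rw [← inner_conj_symm, hab, map_zero]
  obtain ⟨W, hW, hcol⟩ := Matrix.exists_mem_unitaryGroup_col_eq (s := {i, j})
    (fun l => if l = i then a else b) <| by
      refine ⟨fun ⟨l, hl⟩ => ?_, fun ⟨l, hl⟩ ⟨m, hm⟩ hlm => ?_⟩
      · rcases hl with rfl | rfl <;> simp [ha, hb, hij.symm]
      · rcases hl with rfl | rfl <;> rcases hm with rfl | rfl <;> simp_all [hij.symm]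
  refine ⟨W, hW, fun v => ⟨?_, ?_⟩⟩
  · simpa [a] using hcol i (by simp) v
  · simpa [b, hij.symm] using hcol j (by simp) v

open Complex ComplexConjugate in
theorem exists_pow_eq_neg_one_add_conj (k : ℕ) (hk : k ≠ 0) :
    ∃ ζ : ℂ, ζ ^ k = -1 ∧ ζ + conj ζ = 2 * Real.cos (Real.pi / k) := by
  refine ⟨exp (↑(Real.pi / k) * I), ?_, ?_⟩
  · rw [← exp_nat_mul, ← exp_pi_mul_I]
    congr 1
    push_cast
    field_simp
  · rw [add_conj, exp_ofReal_mul_I_re]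
    push_cast
    ring

open Real ComplexConjugate in
theorem exists_convex_comb_pow_eq_neg_one_eq_zero (k : ℕ) (hk : 2 ≤ k) :
    ∃ (t : Fin 4 → ℝ) (ω : Fin 4 → ℂ), (∀ v, 0 ≤ t v) ∧ ∑ v, t v = 1 ∧
      (∀ v, ω v ^ k = -1) ∧ ∑ v, t v * ω v = 0 := by
  obtain ⟨ζ, hζ, hζc⟩ := exists_pow_eq_neg_one_add_conj k (by omega)
  rcases Nat.even_or_odd k with hke | hko
  · refine ⟨![1 / 2, 1 / 2, 0, 0], ![ζ, -ζ, ζ, ζ], ?_, ?_, ?_, ?_⟩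
    · intro v; fin_cases v <;> norm_num
    · simp only [Fin.sum_univ_four, Matrix.cons_val_zero, Matrix.cons_val_one, Matrix.cons_val]
      norm_num
    · intro v; fin_cases v <;> simp [hζ, hke.neg_pow]
    · simp [Fin.sum_univ_four]
  · set c := cos (π / k)
    have hc : 0 ≤ c := by
      have hk' : (2 : ℝ) ≤ k := by exact_mod_cast hk
      refine cos_nonneg_of_mem_Icc ⟨?_, div_le_div_of_nonneg_left pi_pos.le two_pos hk'⟩
      linarith [pi_pos, div_nonneg pi_pos.le (by linarith : (0 : ℝ) ≤ k)]
    set p := 1 / (2 + 2 * c)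
    have hp : 0 ≤ p := by positivity
    have hp₁ : p * (2 + 2 * c) = 1 := one_div_mul_cancel (by positivity)
    refine ⟨![p, p, 2 * c * p, 0], ![ζ, conj ζ, -1, -1], ?_, ?_, ?_, ?_⟩
    · intro v; fin_cases v <;> simp [hp, mul_nonneg, hc]
    · simp only [Fin.sum_univ_four, Matrix.cons_val_zero, Matrix.cons_val_one, Matrix.cons_val]
      linear_combination hp₁
    · intro v; fin_cases v <;> simp [hζ, ← map_pow, hko.neg_one_pow]
    · simp only [Fin.sum_univ_four, Matrix.cons_val_zero, Matrix.cons_val_one, Matrix.cons_val]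
      push_cast
      linear_combination (p : ℂ) * hζc

theorem norm_eq_one_of_pow_eq_neg_one {z : ℂ} {k : ℕ} (hk : k ≠ 0) (h : z ^ k = -1) :
    ‖z‖ = 1 := by
  rw [← pow_eq_one_iff_of_nonneg (norm_nonneg z) hk, ← norm_pow, h, norm_neg, norm_one]

/-- For every `k ≥ 2` there is a unitary `W` on `ℂ⁴` such that `W^{⊗k}` maps the
`k`-partite GHZ state to a superposition supported entirely on non-constant strings. -/
theorem stmt1 (k : ℕ) (hk : 2 ≤ k) :
    ∃ W : Matrix.unitaryGroup (Fin 4) ℂ,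
      ∀ z : Fin k → Fin 4, (∀ i j, z i = z j) →
        (∑ w : Fin k → Fin 4,
            (∏ i, (W : Matrix (Fin 4) (Fin 4) ℂ) (z i) (w i)) * ghzAmp k w) = 0 := by
  obtain ⟨t, ω, ht, ht₁, hω, htω⟩ := exists_convex_comb_pow_eq_neg_one_eq_zero k hk
  obtain ⟨W, hW, hcol⟩ := Matrix.exists_mem_unitaryGroup_col_eq_sqrt (i := 0) (j := 1)
    (by decide) t ω ht ht₁ (fun v => norm_eq_one_of_pow_eq_neg_one (by omega) (hω v)) htω
  refine ⟨⟨W, hW⟩, fun z hz => ?_⟩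
  obtain ⟨v, rfl⟩ : ∃ v, z = fun _ => v := ⟨z ⟨0, by omega⟩, funext fun i => hz i _⟩
  simp [sum_prod_mul_ghzAmp (show k ≠ 0 by omega), (hcol v).1, (hcol v).2, mul_pow, hω v]
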